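/- Fix x, z ∈ ℂ with e^x ≠ 1 and e^{2πiz} ≠ 1. Then F(x,z,τ) tends to πi·(coth(x/2) + coth(πiz)) as Im τ → ∞, where coth(w) = (e^w + e^{−w})/(e^w − e^{−w}). -/

import Mathlib

/-!
Since `(n + 1/2)² = n² + n + 1/4`, `θ(z|τ) = e^{πiτ/4} ∑ₙ (-1)ⁿ e^{πiτ(n² + n)} e^{z(n+1/2)}`.
The exponents `n² + n` are `≥ 0` and vanish only at `n = 0, -1`, so by dominated convergence
the reduced series tends to `e^{z/2} - e^{-z/2} = 2 sinh(z/2)` and its `z`-derivative at `0`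
to `1` as `Im τ → ∞`. The factors `e^{πiτ/4}` cancel in `F`, and
`2πi · 2 sinh(a + b) / (2 sinh a · 2 sinh b) = πi (coth a + coth b)`.
-/

open Complex Filter

noncomputable def jTheta (z : ℂ) (τ : UpperHalfPlane) : ℂ :=
  ∑' n : ℤ, (-1 : ℂ) ^ n * Complex.exp (Real.pi * I * (τ : ℂ) * ((n : ℂ) + 1/2) ^ 2)
    * Complex.exp (z * ((n : ℂ) + 1/2))

noncomputable def jacobiF (x z : ℂ) (τ : UpperHalfPlane) : ℂ :=
  2 * Real.pi * I * deriv (fun w => jTheta w τ) 0 * jTheta (x + 2 * Real.pi * I * z) τ /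
    (jTheta x τ * jTheta (2 * Real.pi * I * z) τ)

noncomputable def cCoth (w : ℂ) : ℂ :=
  (Complex.exp w + Complex.exp (-w)) / (Complex.exp w - Complex.exp (-w))

open scoped Real Topology UpperHalfPlane

lemma int_sq_add_self_nonneg (n : ℤ) : (0 : ℝ) ≤ n ^ 2 + n := by
  have : (0 : ℤ) ≤ n ^ 2 + n := by
    rcases le_or_gt 0 n with h | h <;> nlinarith
  exact_mod_cast this

lemma one_le_int_sq_add_self {n : ℤ} (h0 : n ≠ 0) (h1 : n ≠ -1) : (1 : ℝ) ≤ n ^ 2 + n := by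
  have : (1 : ℤ) ≤ n ^ 2 + n := by
    rcases lt_or_gt_of_ne h0 with h | h
    · have : n ≤ -2 := by omega
      nlinarith
    · nlinarith
  exact_mod_cast this

lemma norm_int_add_half_le (n : ℤ) : ‖(n : ℂ) + 1 / 2‖ ≤ |(n : ℝ)| + 1 / 2 :=
  (norm_add_le _ _).trans (by simp)

lemma norm_cexp_mul_int_add_half_le {w : ℂ} {r : ℝ} (hw : ‖w‖ ≤ r) (n : ℤ) :
    ‖cexp (w * (n + 1 / 2))‖ ≤ rexp (r / 2) * rexp (r * |(n : ℝ)|) := by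
  rw [norm_exp, ← Real.exp_add, Real.exp_le_exp]
  calc (w * (n + 1 / 2)).re ≤ ‖w‖ * ‖(n : ℂ) + 1 / 2‖ := (re_le_norm _).trans (norm_mul _ _).le
    _ ≤ r * (|(n : ℝ)| + 1 / 2) :=
      mul_le_mul hw (norm_int_add_half_le n) (norm_nonneg _) ((norm_nonneg _).trans hw)
    _ = r / 2 + r * |(n : ℝ)| := by ring

namespace jTheta

noncomputable def coeff (τ : ℍ) (n : ℤ) : ℂ :=
  (-1) ^ n * cexp (π * I * τ * (n ^ 2 + n))

noncomputable def reduced (z : ℂ) (τ : ℍ) : ℂ :=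
  ∑' n : ℤ, coeff τ n * cexp (z * (n + 1 / 2))

lemma eq_cexp_mul_reduced (z : ℂ) (τ : ℍ) :
    jTheta z τ = cexp (π * I * τ / 4) * reduced z τ := by
  rw [reduced, ← tsum_mul_left]
  refine tsum_congr fun n => ?_
  rw [coeff, show π * I * τ * ((n : ℂ) + 1 / 2) ^ 2 = π * I * τ / 4 + π * I * τ * (n ^ 2 + n) by
    ring, Complex.exp_add]
  ring

lemma coeff_zero (τ : ℍ) : coeff τ 0 = 1 := by simp [coeff]

lemma coeff_neg_one (τ : ℍ) : coeff τ (-1) = -1 := by simp [coeff]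

lemma norm_coeff (τ : ℍ) (n : ℤ) : ‖coeff τ n‖ = rexp (-(π * τ.im * (n ^ 2 + n))) := by
  have : (π * I * τ * ((n : ℂ) ^ 2 + n)).re = -(π * τ.im * (n ^ 2 + n)) := by
    rw [show (π * I * τ * ((n : ℂ) ^ 2 + n)) = ((π * (n ^ 2 + n) : ℝ) : ℂ) * (τ * I) by
      push_cast; ring, re_ofReal_mul, mul_re, I_re, I_im, UpperHalfPlane.coe_re,
      UpperHalfPlane.coe_im]
    ring
  rw [coeff, norm_mul, norm_zpow, norm_neg, norm_one, one_zpow, one_mul, norm_exp, this]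

lemma norm_coeff_le {t : ℝ} {τ : ℍ} (ht : t ≤ τ.im) (n : ℤ) :
    ‖coeff τ n‖ ≤ rexp (-(π * t * (n ^ 2 + n))) := by
  rw [norm_coeff, Real.exp_le_exp, neg_le_neg_iff]
  have := int_sq_add_self_nonneg n
  gcongr

lemma tendsto_coeff_atImInfty {n : ℤ} (h0 : n ≠ 0) (h1 : n ≠ -1) :
    Tendsto (coeff · n) UpperHalfPlane.atImInfty (𝓝 0) := by
  rw [tendsto_zero_iff_norm_tendsto_zero]
  simp only [norm_coeff]
  refine Real.tendsto_exp_atBot.comp (tendsto_neg_atTop_atBot.comp ?_)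
  exact (tendsto_comap.const_mul_atTop Real.pi_pos).atTop_mul_const
    (zero_lt_one.trans_le (one_le_int_sq_add_self h0 h1))

lemma summable_coeff_bound {t : ℝ} (ht : 0 < t) (b : ℝ) :
    Summable fun n : ℤ => rexp (-(π * t * (n ^ 2 + n))) * rexp (b * |(n : ℝ)|) := by
  refine (summable_pow_mul_jacobiTheta₂_term_bound ((π * t + b) / (2 * π)) ht 0).of_nonneg_of_le
    (fun n => by positivity) fun n => ?_
  rw [pow_zero, one_mul, ← Real.exp_add, Real.exp_le_exp]
  have := mul_le_mul_of_nonneg_left (neg_abs_le (n : ℝ)) (mul_pos Real.pi_pos ht).le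
  push_cast
  field_simp
  linarith

lemma tendsto_tsum_coeff_mul {g : ℤ → ℂ} {C b : ℝ}
    (hg : ∀ n, ‖g n‖ ≤ C * rexp (b * |(n : ℝ)|)) :
    Tendsto (fun τ => ∑' n, coeff τ n * g n) UpperHalfPlane.atImInfty (𝓝 (g 0 - g (-1))) := by
  have hsum : ∑' n : ℤ, (if n = 0 ∨ n = -1 then (-1 : ℂ) ^ n * g n else 0) = g 0 - g (-1) := by
    rw [tsum_eq_sum (s := {0, -1}) fun n hn => if_neg (by simpa using hn),
      Finset.sum_pair (by decide)]
    simp [sub_eq_add_neg]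
  rw [← hsum]
  refine tendsto_tsum_of_dominated_convergence ((summable_coeff_bound one_pos b).mul_left C)
    (fun n => ?_) ?_
  · split_ifs with hn
    · obtain rfl | rfl := hn <;> simp [coeff_zero, coeff_neg_one]
    · obtain ⟨h0, h1⟩ := not_or.mp hn
      simpa using (tendsto_coeff_atImInfty h0 h1).mul_const (g n)
  · filter_upwards [tendsto_comap.eventually_ge_atTop 1] with τ hτ n
    rw [norm_mul]
    exact (mul_le_mul (norm_coeff_le hτ n) (hg n) (norm_nonneg _) (Real.exp_nonneg _)).trans_eq
      (by ring)

lemma hasSum_deriv_reduced (τ : ℍ) :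
    HasSum (fun n : ℤ => coeff τ n * (n + 1 / 2)) (deriv (reduced · τ) 0) := by
  have hderiv (n : ℤ) : HasDerivAt (fun w => coeff τ n * cexp (w * (n + 1 / 2)))
      (coeff τ n * (n + 1 / 2)) 0 := by
    simpa using (((hasDerivAt_id (0 : ℂ)).mul_const ((n : ℂ) + 1 / 2)).cexp).const_mul (coeff τ n)
  refine (funext fun n => (hderiv n).deriv) ▸ Complex.hasSum_deriv_of_summable_norm
    ((summable_coeff_bound τ.im_pos 1).mul_left (rexp (1 / 2)))
    (fun n => by fun_prop) Metric.isOpen_ball (fun n w hw => ?_) (Metric.mem_ball_self one_pos)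
  rw [norm_mul]
  exact (mul_le_mul (norm_coeff_le le_rfl n) (norm_cexp_mul_int_add_half_le
    (mem_ball_zero_iff.mp hw).le n) (norm_nonneg _) (Real.exp_nonneg _)).trans_eq (by ring)

lemma deriv_at_zero (τ : ℍ) :
    deriv (jTheta · τ) 0 = cexp (π * I * τ / 4) * ∑' n : ℤ, coeff τ n * (n + 1 / 2) := by
  simp only [eq_cexp_mul_reduced, deriv_const_mul_field', (hasSum_deriv_reduced τ).tsum_eq]

lemma tendsto_reduced_atImInfty (z : ℂ) :
    Tendsto (reduced z) UpperHalfPlane.atImInfty (𝓝 (2 * sinh (z / 2))) := by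
  have h : 2 * sinh (z / 2) =
      cexp (z * (((0 : ℤ) : ℂ) + 1 / 2)) - cexp (z * (((-1 : ℤ) : ℂ) + 1 / 2)) := by
    rw [two_sinh]
    push_cast
    ring_nf
  rw [h]
  exact tendsto_tsum_coeff_mul (g := fun n : ℤ => cexp (z * (n + 1 / 2)))
    (norm_cexp_mul_int_add_half_le le_rfl)

lemma tendsto_tsum_coeff_mul_add_half :
    Tendsto (fun τ => ∑' n : ℤ, coeff τ n * (n + 1 / 2)) UpperHalfPlane.atImInfty (𝓝 1) := by
  convert tendsto_tsum_coeff_mul (g := fun n : ℤ => (n : ℂ) + 1 / 2) (C := 1) (b := 1)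
    fun n => ?_ using 2
  · norm_num
  · calc ‖(n : ℂ) + 1 / 2‖ ≤ |(n : ℝ)| + 1 := (norm_int_add_half_le n).trans (by norm_num)
      _ ≤ 1 * rexp (1 * |(n : ℝ)|) := by
        rw [one_mul, one_mul]
        exact Real.add_one_le_exp _

end jTheta

lemma sinh_half_ne_zero_of_exp_ne_one {w : ℂ} (hw : cexp w ≠ 1) : sinh (w / 2) ≠ 0 := by
  have h : cexp w - 1 = 2 * sinh (w / 2) * cexp (w / 2) := by
    rw [two_sinh, sub_mul, ← Complex.exp_add, ← Complex.exp_add, add_halves, neg_add_cancel,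
      Complex.exp_zero]
  exact fun h0 => hw (sub_eq_zero.mp (by rw [h, h0, mul_zero, zero_mul]))

lemma cCoth_eq_cosh_div_sinh (w : ℂ) : cCoth w = cosh w / sinh w := by
  rw [cCoth, ← two_cosh, ← two_sinh, mul_div_mul_left _ _ two_ne_zero]

lemma sinh_add_div_sinh_mul_sinh {a b : ℂ} (ha : sinh a ≠ 0) (hb : sinh b ≠ 0) :
    sinh (a + b) / (sinh a * sinh b) = cCoth a + cCoth b := by
  rw [cCoth_eq_cosh_div_sinh, cCoth_eq_cosh_div_sinh, sinh_add]
  field_simp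
  ring

lemma jacobiF_eq_div_reduced (x z : ℂ) (τ : ℍ) :
    jacobiF x z τ = 2 * π * I * (∑' n : ℤ, jTheta.coeff τ n * (n + 1 / 2)) *
      jTheta.reduced (x + 2 * π * I * z) τ /
        (jTheta.reduced x τ * jTheta.reduced (2 * π * I * z) τ) := by
  have hE := Complex.exp_ne_zero (π * I * τ / 4)
  rw [jacobiF, jTheta.deriv_at_zero, jTheta.eq_cexp_mul_reduced, jTheta.eq_cexp_mul_reduced,
    jTheta.eq_cexp_mul_reduced]
  field_simp

/-- For fixed `x, z` with `e^x ≠ 1` and `e^{2πiz} ≠ 1`,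
`F(x,z,τ) → πi (coth(x/2) + coth(πiz))` as `Im τ → ∞`. -/
theorem jacobiF_tendsto_atImInfty (x z : ℂ)
    (hx : Complex.exp x ≠ 1) (hz : Complex.exp (2 * Real.pi * I * z) ≠ 1) :
    Tendsto (fun τ : UpperHalfPlane => jacobiF x z τ) UpperHalfPlane.atImInfty
      (nhds (Real.pi * I * (cCoth (x / 2) + cCoth (Real.pi * I * z)))) := by
  have hhalf : 2 * π * I * z / 2 = π * I * z := by ring
  have hx' := sinh_half_ne_zero_of_exp_ne_one hx
  have hz' : sinh (π * I * z) ≠ 0 := hhalf ▸ sinh_half_ne_zero_of_exp_ne_one hz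
  have hlim := (((tendsto_const_nhds (x := 2 * π * I)).mul
    jTheta.tendsto_tsum_coeff_mul_add_half).mul
      (jTheta.tendsto_reduced_atImInfty (x + 2 * π * I * z))).div
    ((jTheta.tendsto_reduced_atImInfty x).mul (jTheta.tendsto_reduced_atImInfty (2 * π * I * z)))
    (by simp [hhalf, hx', hz'])
  have hval : π * I * (cCoth (x / 2) + cCoth (π * I * z)) =
      2 * π * I * 1 * (2 * sinh ((x + 2 * π * I * z) / 2)) /
        (2 * sinh (x / 2) * (2 * sinh (2 * π * I * z / 2))) := by
    rw [add_div, hhalf, ← sinh_add_div_sinh_mul_sinh hx' hz']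
    field_simp
  simp only [jacobiF_eq_div_reduced, hval]
  exact hlim
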